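/- Assume U is connected. Then both S_t¹×S_s¹-valued lightcone Gauss maps LG^+ and LG^− are constant maps if and only if X(U) is contained in a 2-dimensional affine plane q + W of ℝ⁴₂ whose direction W is a 2-dimensional linear subspace on which the pseudo scalar product ⟨,⟩ is nondegenerate of signature (1,1) (i.e. M is contained in a Lorentzian 2-plane). -/

import Mathlib

noncomputable section
open Topology Filter

def pprod (x y : Fin 4 → ℝ) : ℝ :=
  -(x 0 * y 0) - x 1 * y 1 + x 2 * y 2 + x 3 * y 3

lemma pprod_comm (x y : Fin 4 → ℝ) : pprod x y = pprod y x := by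
  simp [pprod]; ring

lemma pprod_add_left (x y z : Fin 4 → ℝ) : pprod (x + y) z = pprod x z + pprod y z := by
  simp [pprod]; ring

lemma pprod_smul_left (c : ℝ) (x y : Fin 4 → ℝ) : pprod (c • x) y = c * pprod x y := by
  simp [pprod]; ring

lemma pprod_sub_left (x y z : Fin 4 → ℝ) : pprod (x - y) z = pprod x z - pprod y z := by
  simp [pprod]; ring

lemma pprod_add_right (x y z : Fin 4 → ℝ) : pprod x (y + z) = pprod x y + pprod x z := by
  simp [pprod]; ring

lemma pprod_smul_right (c : ℝ) (x y : Fin 4 → ℝ) : pprod x (c • y) = c * pprod x y := by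
  simp [pprod]; ring

lemma pprod_sub_right (x y z : Fin 4 → ℝ) : pprod x (y - z) = pprod x y - pprod x z := by
  simp [pprod]; ring

lemma pprod_zero_left (y : Fin 4 → ℝ) : pprod 0 y = 0 := by simp [pprod]

/-- the pseudo product with a fixed second argument, as a CLM -/
def pprodL (c : Fin 4 → ℝ) : (Fin 4 → ℝ) →L[ℝ] ℝ :=
  LinearMap.toContinuousLinearMap
    { toFun := fun w => pprod w c
      map_add' := fun x y => pprod_add_left x y c
      map_smul' := fun r x => by simpa using pprod_smul_left r x c }

@[simp] lemma pprodL_apply (c w : Fin 4 → ℝ) : pprodL c w = pprod w c := rfl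

lemma hasFDerivAt_pprod (c : Fin 4 → ℝ) {X : ℝ × ℝ → Fin 4 → ℝ} {p : ℝ × ℝ}
    (hX : DifferentiableAt ℝ X p) :
    HasFDerivAt (fun q => pprod (X q) c) ((pprodL c).comp (fderiv ℝ X p)) p :=
  (pprodL c).hasFDerivAt.comp p hX.hasFDerivAt

lemma clm_eq_zero_of_basis (L : ℝ × ℝ →L[ℝ] ℝ) (h1 : L (1, 0) = 0) (h2 : L (0, 1) = 0) :
    L = 0 := by
  apply ContinuousLinearMap.ext
  rintro ⟨x, y⟩
  have : (x, y) = x • ((1:ℝ), (0:ℝ)) + y • ((0:ℝ), (1:ℝ)) := by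
    simp [Prod.ext_iff]
  rw [this, map_add, map_smul, map_smul, h1, h2]
  simp

lemma const_on_of_fderiv_zero {U : Set (ℝ × ℝ)} (hU : IsOpen U) (hc : IsPreconnected U)
    {f : ℝ × ℝ → ℝ} (hd : ∀ p ∈ U, DifferentiableAt ℝ f p)
    (h0 : ∀ p ∈ U, fderiv ℝ f p = 0) :
    ∀ p ∈ U, ∀ q ∈ U, f p = f q := by
  intro p hp q hq
  have hcont : ContinuousOn f U := fun x hx => (hd x hx).continuousAt.continuousWithinAt
  set A : Set (ℝ × ℝ) := {x | x ∈ U ∧ f x = f p} with hA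
  set B : Set (ℝ × ℝ) := U ∩ f ⁻¹' ({f p}ᶜ) with hB
  have hAopen : IsOpen A := by
    rw [isOpen_iff_forall_mem_open]
    rintro x ⟨hxU, hxf⟩
    obtain ⟨ε, hε, hball⟩ := Metric.isOpen_iff.1 hU x hxU
    refine ⟨Metric.ball x ε, ?_, Metric.isOpen_ball, Metric.mem_ball_self hε⟩
    intro y hy
    have hyU := hball hy
    refine ⟨hyU, ?_⟩
    have := (convex_ball x ε).is_const_of_fderivWithin_eq_zero
      (f := f) (fun z hz => (hd z (hball hz)).differentiableWithinAt)
      (fun z hz => by rw [fderivWithin_of_isOpen Metric.isOpen_ball hz]; exact h0 z (hball hz))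
      hy (Metric.mem_ball_self hε)
    rw [this, hxf]
  have hBopen : IsOpen B := hcont.isOpen_inter_preimage hU isOpen_compl_singleton
  have hdisj : Disjoint A B := by
    rw [Set.disjoint_iff]
    rintro x ⟨⟨_, h1⟩, _, h2⟩
    exact absurd h1 h2
  have hcover : U ⊆ A ∪ B := by
    intro x hx
    by_cases h : f x = f p
    · exact Or.inl ⟨hx, h⟩
    · exact Or.inr ⟨hx, h⟩
  rcases hc.subset_or_subset hAopen hBopen hdisj hcover with h | h
  · exact ((h hq).2).symm
  · exact absurd rfl (h hp).2

lemma dichotomy {U : Set (ℝ × ℝ)} (hU : IsOpen U) (hc : IsPreconnected U)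
    {g h : ℝ × ℝ → ℝ} (hg : ContinuousOn g U) (hh : ContinuousOn h U)
    (hcov : ∀ p ∈ U, g p = 0 ∨ h p = 0) (hdis : ∀ p ∈ U, ¬(g p = 0 ∧ h p = 0)) :
    (∀ p ∈ U, g p = 0) ∨ (∀ p ∈ U, h p = 0) := by
  set A : Set (ℝ × ℝ) := U ∩ h ⁻¹' ({0}ᶜ) with hA
  set B : Set (ℝ × ℝ) := U ∩ g ⁻¹' ({0}ᶜ) with hB
  have hAopen : IsOpen A := hh.isOpen_inter_preimage hU isOpen_compl_singleton
  have hBopen : IsOpen B := hg.isOpen_inter_preimage hU isOpen_compl_singleton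
  have hdisj : Disjoint A B := by
    rw [Set.disjoint_iff]
    rintro x ⟨⟨hxU, h1⟩, _, h2⟩
    rcases hcov x hxU with h' | h'
    · exact h2 h'
    · exact h1 h'
  have hcover : U ⊆ A ∪ B := by
    intro x hx
    by_cases h' : g x = 0
    · have : ¬ h x = 0 := fun hh0 => hdis x hx ⟨h', hh0⟩
      exact Or.inl ⟨hx, this⟩
    · exact Or.inr ⟨hx, h'⟩
  rcases hc.subset_or_subset hAopen hBopen hdisj hcover with hsub | hsub
  · left
    intro p hp
    rcases hcov p hp with h' | h'
    · exact h'
    · exact absurd h' (hsub hp).2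
  · right
    intro p hp
    rcases hcov p hp with h' | h'
    · exact absurd h' (hsub hp).2
    · exact h'
lemma contOn_pprod {f g : ℝ × ℝ → Fin 4 → ℝ} {U : Set (ℝ × ℝ)}
    (hf : ContinuousOn f U) (hg : ContinuousOn g U) :
    ContinuousOn (fun p => pprod (f p) (g p)) U := by
  have hfi : ∀ i, ContinuousOn (fun p => f p i) U := fun i =>
    (continuous_apply i).comp_continuousOn hf
  have hgi : ∀ i, ContinuousOn (fun p => g p i) U := fun i =>
    (continuous_apply i).comp_continuousOn hg
  unfold pprod
  exact ((((hfi 0).mul (hgi 0)).neg.sub ((hfi 1).mul (hgi 1))).add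
    ((hfi 2).mul (hgi 2))).add ((hfi 3).mul (hgi 3))

lemma exists_coords (T1 T2 a b w : Fin 4 → ℝ)
    (h1a : pprod T1 a = 0) (h1b : pprod T1 b = 0)
    (h2a : pprod T2 a = 0) (h2b : pprod T2 b = 0)
    (haa : pprod a a = -1) (hbb : pprod b b = 1) (hab : pprod a b = 0)
    (hD : pprod T1 T1 * pprod T2 T2 - (pprod T1 T2) ^ 2 ≠ 0)
    (hwa : pprod w a = 0) (hwb : pprod w b = 0) :
    ∃ c d : ℝ, w = c • T1 + d • T2 := by
  set V : Fin 4 → (Fin 4 → ℝ) := ![T1, T2, a, b] with hV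
  have hexp : ∀ g : Fin 4 → ℝ, ∑ i, g i • V i = g 0 • T1 + g 1 • T2 + g 2 • a + g 3 • b := by
    intro g
    simp [hV, Fin.sum_univ_four]
  have key : ∀ g : Fin 4 → ℝ, ∑ i, g i • V i = 0 → ∀ i, g i = 0 := by
    intro g hg
    rw [hexp] at hg
    have pa := congrArg (fun z => pprod z a) hg
    have pb := congrArg (fun z => pprod z b) hg
    have p1 := congrArg (fun z => pprod z T1) hg
    have p2 := congrArg (fun z => pprod z T2) hg
    have hba : pprod b a = 0 := by rw [pprod_comm]; exact hab
    have ha1 : pprod a T1 = 0 := by rw [pprod_comm]; exact h1a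
    have hb1 : pprod b T1 = 0 := by rw [pprod_comm]; exact h1b
    have ha2 : pprod a T2 = 0 := by rw [pprod_comm]; exact h2a
    have hb2 : pprod b T2 = 0 := by rw [pprod_comm]; exact h2b
    have h21 : pprod T2 T1 = pprod T1 T2 := pprod_comm _ _
    simp only [pprod_add_left, pprod_smul_left, pprod_zero_left,
      h1a, h1b, h2a, h2b, haa, hbb, hab, hba, ha1, hb1, ha2, hb2, h21] at pa pb p1 p2
    have hg2 : g 2 = 0 := by linarith
    have hg3 : g 3 = 0 := by linarith
    rw [hg2, hg3] at p1 p2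
    set A := pprod T1 T1
    set B := pprod T1 T2
    set C := pprod T2 T2
    have e1 : g 0 * A + g 1 * B = 0 := by simp only [zero_mul, mul_zero, add_zero, zero_add] at p1; linarith
    have e2 : g 0 * B + g 1 * C = 0 := by simp only [zero_mul, mul_zero, add_zero, zero_add] at p2; linarith
    have hg0 : g 0 * (A * C - B ^ 2) = 0 := by linear_combination C * e1 - B * e2
    have hg1 : g 1 * (A * C - B ^ 2) = 0 := by linear_combination A * e2 - B * e1
    have h0 : g 0 = 0 := by
      rcases mul_eq_zero.1 hg0 with h | h
      · exact h
      · exact absurd h hD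
    have h1 : g 1 = 0 := by
      rcases mul_eq_zero.1 hg1 with h | h
      · exact h
      · exact absurd h hD
    intro i
    fin_cases i <;> assumption
  have hli : LinearIndependent ℝ V := Fintype.linearIndependent_iff.2 key
  have hcard : Fintype.card (Fin 4) = Module.finrank ℝ (Fin 4 → ℝ) := by
    simp
  have hspan : Submodule.span ℝ (Set.range V) = ⊤ :=
    hli.span_eq_top_of_card_eq_finrank hcard
  have hw : w ∈ Submodule.span ℝ (Set.range V) := by rw [hspan]; trivial
  rw [Finsupp.mem_span_range_iff_exists_finsupp] at hw
  obtain ⟨c, hc⟩ := hw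
  have hc' : c 0 • T1 + c 1 • T2 + c 2 • a + c 3 • b = w := by
    rw [← hexp c]
    rw [← hc]
    exact (Finsupp.sum_fintype c (fun i a => a • V i) (by intro i; exact zero_smul ℝ (V i))).symm
  have pa := congrArg (fun z => pprod z a) hc'
  have pb := congrArg (fun z => pprod z b) hc'
  have hba : pprod b a = 0 := by rw [pprod_comm]; exact hab
  simp only [pprod_add_left, pprod_smul_left, h1a, h1b, h2a, h2b, haa, hbb, hab, hba,
    hwa, hwb] at pa pb
  have hc2 : c 2 = 0 := by linarith
  have hc3 : c 3 = 0 := by linarith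
  refine ⟨c 0, c 1, ?_⟩
  rw [← hc', hc2, hc3]
  simp
lemma gs_ne (T1 T2 : Fin 4 → ℝ) (hA : pprod T1 T1 ≠ 0)
    (hD : pprod T1 T1 * pprod T2 T2 - (pprod T1 T2) ^ 2 < 0) :
    ∃ u v : Fin 4 → ℝ, pprod u u = -1 ∧ pprod v v = 1 ∧ pprod u v = 0 ∧
      T1 ∈ Submodule.span ℝ {u, v} ∧ T2 ∈ Submodule.span ℝ {u, v} := by
  set A := pprod T1 T1 with hAdef
  set B := pprod T1 T2 with hBdef
  set C := pprod T2 T2 with hCdef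
  set r := Real.sqrt |A| with hrdef
  have hrpos : 0 < r := Real.sqrt_pos.2 (abs_pos.2 hA)
  have hr2 : r ^ 2 = |A| := Real.sq_sqrt (abs_nonneg A)
  set s2 : Fin 4 → ℝ := T2 - (B / A) • T1 with hs2def
  have hs2 : pprod s2 s2 = (A * C - B ^ 2) / A := by
    rw [hs2def]
    rw [pprod_sub_left, pprod_sub_right, pprod_sub_right, pprod_smul_left, pprod_smul_left,
      pprod_smul_right, pprod_smul_right, pprod_comm T2 T1]
    rw [← hAdef, ← hBdef, ← hCdef]
    field_simp
    ring
  have hDA : (A * C - B ^ 2) / A ≠ 0 := div_ne_zero (ne_of_lt hD) hA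
  set t := Real.sqrt |(A * C - B ^ 2) / A| with htdef
  have htpos : 0 < t := Real.sqrt_pos.2 (abs_pos.2 hDA)
  have ht2 : t ^ 2 = |(A * C - B ^ 2) / A| := Real.sq_sqrt (abs_nonneg _)
  set u1 : Fin 4 → ℝ := r⁻¹ • T1 with hu1def
  set u2 : Fin 4 → ℝ := t⁻¹ • s2 with hu2def
  have hu1u1 : pprod u1 u1 = A / |A| := by
    rw [hu1def, pprod_smul_left, pprod_smul_right, ← hAdef, ← hr2]
    field_simp
  have hu2u2 : pprod u2 u2 = ((A * C - B ^ 2) / A) / |(A * C - B ^ 2) / A| := by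
    rw [hu2def, pprod_smul_left, pprod_smul_right, hs2, ← ht2]
    field_simp
  have hu1u2 : pprod u1 u2 = 0 := by
    rw [hu1def, hu2def, pprod_smul_right, pprod_smul_left, hs2def, pprod_sub_right,
      pprod_smul_right, ← hAdef, ← hBdef]
    field_simp
    ring
  have hT1mem : ∀ z : Fin 4 → ℝ, T1 ∈ Submodule.span ℝ {u1, z} := by
    intro z
    rw [Submodule.mem_span_pair]
    exact ⟨r, 0, by rw [hu1def, smul_smul]; field_simp; simp⟩
  have hT1mem' : ∀ z : Fin 4 → ℝ, T1 ∈ Submodule.span ℝ {z, u1} := by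
    intro z
    rw [Submodule.mem_span_pair]
    exact ⟨0, r, by rw [hu1def, smul_smul]; field_simp; simp⟩
  have hT2eq : (B / A * r) • u1 + t • u2 = T2 := by
    rw [hu1def, hu2def, smul_smul, smul_smul, hs2def]
    rw [mul_inv_cancel_right₀ (ne_of_gt hrpos), mul_inv_cancel₀ (ne_of_gt htpos)]
    simp
  have hT2mem : T2 ∈ Submodule.span ℝ {u1, u2} :=
    Submodule.mem_span_pair.2 ⟨B / A * r, t, hT2eq⟩
  have hT2mem' : T2 ∈ Submodule.span ℝ {u2, u1} := by
    rw [Submodule.mem_span_pair]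
    exact ⟨t, B / A * r, by rw [← hT2eq]; abel⟩
  rcases lt_or_gt_of_ne hA with hAneg | hApos
  · -- A < 0 : u1 is timelike, u2 spacelike
    refine ⟨u1, u2, ?_, ?_, hu1u2, hT1mem u2, hT2mem⟩
    · rw [hu1u1, abs_of_neg hAneg]; field_simp
    · rw [hu2u2]
      have : 0 < (A * C - B ^ 2) / A := div_pos_of_neg_of_neg (by nlinarith) hAneg
      rw [abs_of_pos this]
      exact div_self hDA
  · -- A > 0 : u1 spacelike, u2 timelike
    refine ⟨u2, u1, ?_, ?_, by rw [pprod_comm]; exact hu1u2, hT1mem' u2, hT2mem'⟩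
    · rw [hu2u2]
      have hneg : (A * C - B ^ 2) / A < 0 := div_neg_of_neg_of_pos (by nlinarith) hApos
      rw [abs_of_neg hneg]
      rw [div_neg, div_self hDA]
    · rw [hu1u1, abs_of_pos hApos]; field_simp

lemma gs (T1 T2 : Fin 4 → ℝ)
    (hD : pprod T1 T1 * pprod T2 T2 - (pprod T1 T2) ^ 2 < 0) :
    ∃ u v : Fin 4 → ℝ, pprod u u = -1 ∧ pprod v v = 1 ∧ pprod u v = 0 ∧
      T1 ∈ Submodule.span ℝ {u, v} ∧ T2 ∈ Submodule.span ℝ {u, v} := by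
  by_cases hA : pprod T1 T1 = 0
  · have hB : pprod T1 T2 ≠ 0 := by
      intro h
      rw [hA, h] at hD
      norm_num at hD
    set k : ℝ := if pprod T2 T2 = 0 then 1 else pprod T1 T2 / pprod T2 T2 with hk
    set T1' : Fin 4 → ℝ := T1 + k • T2 with hT1'
    have hexp : pprod T1' T1' =
        pprod T1 T1 + 2 * k * pprod T1 T2 + k ^ 2 * pprod T2 T2 := by
      rw [hT1', pprod_add_left, pprod_add_right, pprod_add_right, pprod_smul_left,
        pprod_smul_left, pprod_smul_right, pprod_smul_right, pprod_comm T2 T1]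
      ring
    have hexpB : pprod T1' T2 = pprod T1 T2 + k * pprod T2 T2 := by
      rw [hT1', pprod_add_left, pprod_smul_left]
    have hA' : pprod T1' T1' ≠ 0 := by
      rw [hexp, hA]
      by_cases hC : pprod T2 T2 = 0
      · rw [hk, if_pos hC, hC]
        simpa using hB
      · rw [hk, if_neg hC]
        have h3 : (0:ℝ) + 2 * (pprod T1 T2 / pprod T2 T2) * pprod T1 T2 +
            (pprod T1 T2 / pprod T2 T2) ^ 2 * pprod T2 T2 =
            3 * pprod T1 T2 ^ 2 / pprod T2 T2 := by
          field_simp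
          ring
        rw [h3]
        exact div_ne_zero (mul_ne_zero (by norm_num) (pow_ne_zero 2 hB)) hC
    have hD' : pprod T1' T1' * pprod T2 T2 - (pprod T1' T2) ^ 2 < 0 := by
      have : pprod T1' T1' * pprod T2 T2 - (pprod T1' T2) ^ 2 =
          pprod T1 T1 * pprod T2 T2 - (pprod T1 T2) ^ 2 := by
        rw [hexp, hexpB]; ring
      rw [this]; exact hD
    obtain ⟨u, v, huu, hvv, huv, h1', h2'⟩ := gs_ne T1' T2 hA' hD'
    refine ⟨u, v, huu, hvv, huv, ?_, h2'⟩
    have : T1 = T1' - k • T2 := by rw [hT1']; abel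
    rw [this]
    exact Submodule.sub_mem _ h1' (Submodule.smul_mem _ k h2')
  · exact gs_ne T1 T2 hA hD
lemma pprod_pm (x1 x2 y1 y2 : Fin 4 → ℝ) (σ τ : ℝ) :
    pprod (x1 + σ • x2) (y1 + τ • y2) =
      pprod x1 y1 + τ * pprod x1 y2 + σ * pprod x2 y1 + σ * τ * pprod x2 y2 := by
  rw [pprod_add_left, pprod_add_right, pprod_add_right, pprod_smul_left, pprod_smul_left,
    pprod_smul_right, pprod_smul_right]
  ring

lemma lightlike_comp_pos (w z : Fin 4 → ℝ) (hww : pprod w w = 0) (hwz : pprod w z ≠ 0) :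
    0 < w 0 ^ 2 + w 1 ^ 2 := by
  by_contra hcon
  push_neg at hcon
  have h0 : w 0 = 0 := by nlinarith [sq_nonneg (w 0), sq_nonneg (w 1)]
  have h1 : w 1 = 0 := by nlinarith [sq_nonneg (w 0), sq_nonneg (w 1)]
  unfold pprod at hww hwz
  rw [h0, h1] at hww
  have h2 : w 2 = 0 := by nlinarith [sq_nonneg (w 2), sq_nonneg (w 3)]
  have h3 : w 3 = 0 := by nlinarith [sq_nonneg (w 2), sq_nonneg (w 3)]
  rw [h0, h1, h2, h3] at hwz
  simp at hwz

lemma fderiv_apply_mem {W : Submodule ℝ (Fin 4 → ℝ)} {Y : ℝ × ℝ → Fin 4 → ℝ}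
    {U : Set (ℝ × ℝ)} (hU : IsOpen U) {p : ℝ × ℝ} (hp : p ∈ U)
    (hd : DifferentiableAt ℝ Y p) (hmem : ∀ x ∈ U, Y x ∈ W) (v : ℝ × ℝ) :
    fderiv ℝ Y p v ∈ W := by
  have h0 : p + (0:ℝ) • v = p := by simp
  have hline : HasDerivAt (fun t : ℝ => p + t • v) v 0 := by
    simpa using ((hasDerivAt_id (0:ℝ)).smul_const v).const_add p
  have hF' : HasFDerivAt Y (fderiv ℝ Y p) (p + (0:ℝ) • v) := by rw [h0]; exact hd.hasFDerivAt
  have hcomp : HasDerivAt (fun t : ℝ => Y (p + t • v)) (fderiv ℝ Y p v) 0 := by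
    exact hF'.comp_hasDerivAt 0 hline
  have hW : IsClosed (W : Set (Fin 4 → ℝ)) := Submodule.closed_of_finiteDimensional W
  have hU0 : ∀ᶠ t in 𝓝 (0:ℝ), p + t • v ∈ U := by
    have hcont : ContinuousAt (fun t : ℝ => p + t • v) 0 :=
      (continuous_const.add (continuous_id.smul continuous_const)).continuousAt
    have := hcont.preimage_mem_nhds (hU.mem_nhds (by rw [h0]; exact hp))
    exact this
  have hev : ∀ᶠ t in 𝓝[≠] (0:ℝ),
      slope (fun t : ℝ => Y (p + t • v)) 0 t ∈ (W : Set (Fin 4 → ℝ)) := by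
    refine (hU0.filter_mono nhdsWithin_le_nhds).mono ?_
    intro t ht
    rw [slope_def_module]
    exact W.smul_mem _ (W.sub_mem (hmem _ ht) (hmem _ (by rw [h0]; exact hp)))
  exact hW.mem_of_tendsto (hasDerivAt_iff_tendsto_slope.1 hcomp) hev

lemma solve2 {a b c d s t : ℝ} (h1 : a * s + b * t = 0) (h2 : c * s + d * t = 0)
    (hne : a * d - b * c ≠ 0) : s = 0 ∧ t = 0 := by
  have hs : s * (a * d - b * c) = 0 := by linear_combination d * h1 - b * h2
  have ht : t * (a * d - b * c) = 0 := by linear_combination a * h2 - c * h1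
  constructor
  · rcases mul_eq_zero.1 hs with h | h
    · exact h
    · exact absurd h hne
  · rcases mul_eq_zero.1 ht with h | h
    · exact h
    · exact absurd h hne

lemma div_sign_pos {g r : ℝ} (hg : 0 < g) (hr : 0 < r) : g / (g * r) = r⁻¹ := by
  field_simp

lemma div_sign_neg {g r : ℝ} (hg : g < 0) (hr : 0 < r) : g / (-g * r) = -r⁻¹ := by
  have hg' : g ≠ 0 := ne_of_lt hg
  field_simp
def pdx (f : ℝ × ℝ → ℝ) (p : ℝ × ℝ) : ℝ := fderiv ℝ f p (1, 0)
def pdy (f : ℝ × ℝ → ℝ) (p : ℝ × ℝ) : ℝ := fderiv ℝ f p (0, 1)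

def Dx (X : ℝ × ℝ → Fin 4 → ℝ) (p : ℝ × ℝ) : Fin 4 → ℝ := fderiv ℝ X p (1, 0)
def Dy (X : ℝ × ℝ → Fin 4 → ℝ) (p : ℝ × ℝ) : Fin 4 → ℝ := fderiv ℝ X p (0, 1)
def Dxx (X : ℝ × ℝ → Fin 4 → ℝ) (p : ℝ × ℝ) : Fin 4 → ℝ := Dx (Dx X) p
def Dxy (X : ℝ × ℝ → Fin 4 → ℝ) (p : ℝ × ℝ) : Fin 4 → ℝ := Dy (Dx X) p
def Dyy (X : ℝ × ℝ → Fin 4 → ℝ) (p : ℝ × ℝ) : Fin 4 → ℝ := Dy (Dy X) p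

def detHess (f : ℝ × ℝ → ℝ) (p : ℝ × ℝ) : ℝ :=
  pdx (pdx f) p * pdy (pdy f) p - (pdy (pdx f) p) ^ 2

def IsLorentzSurface (U : Set (ℝ × ℝ)) (X : ℝ × ℝ → Fin 4 → ℝ) : Prop :=
  IsOpen U ∧ ContDiffOn ℝ (⊤ : ℕ∞) X U ∧
    ∀ p ∈ U,
      pprod (Dx X p) (Dx X p) * pprod (Dy X p) (Dy X p) - (pprod (Dx X p) (Dy X p)) ^ 2 < 0

def IsNormalFrame (U : Set (ℝ × ℝ)) (X e1 e2 : ℝ × ℝ → Fin 4 → ℝ) : Prop :=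
  ContDiffOn ℝ (⊤ : ℕ∞) e1 U ∧ ContDiffOn ℝ (⊤ : ℕ∞) e2 U ∧
    ∀ p ∈ U,
      pprod (e1 p) (e1 p) = -1 ∧ pprod (e2 p) (e2 p) = 1 ∧ pprod (e1 p) (e2 p) = 0 ∧
      pprod (e1 p) (Dx X p) = 0 ∧ pprod (e1 p) (Dy X p) = 0 ∧
      pprod (e2 p) (Dx X p) = 0 ∧ pprod (e2 p) (Dy X p) = 0

def xi (e1 e2 : ℝ × ℝ → Fin 4 → ℝ) (σ : ℝ) (p : ℝ × ℝ) : ℝ :=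
  Real.sqrt ((e1 p 0 + σ * e2 p 0) ^ 2 + (e1 p 1 + σ * e2 p 1) ^ 2)

def LG (e1 e2 : ℝ × ℝ → Fin 4 → ℝ) (σ : ℝ) (p : ℝ × ℝ) : Fin 4 → ℝ :=
  (xi e1 e2 σ p)⁻¹ • (e1 p + σ • e2 p)

def KlVanish (X e1 e2 : ℝ × ℝ → Fin 4 → ℝ) (σ : ℝ) (p : ℝ × ℝ) : Prop :=
  pprod (Dxx X p) (e1 p + σ • e2 p) * pprod (Dyy X p) (e1 p + σ • e2 p)
    - (pprod (Dxy X p) (e1 p + σ • e2 p)) ^ 2 = 0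

/-- A 2-dimensional linear subspace of `ℝ⁴₂` on which the pseudo scalar product is
nondegenerate of signature (1,1), described by a pseudo-orthonormal basis. -/
def IsLorentzPlane (W : Submodule ℝ (Fin 4 → ℝ)) : Prop :=
  ∃ u v : Fin 4 → ℝ, pprod u u = -1 ∧ pprod v v = 1 ∧ pprod u v = 0 ∧
    W = Submodule.span ℝ {u, v}

lemma pprod_comb2 (a b c d : ℝ) (u v : Fin 4 → ℝ) :
    pprod (a • u + b • v) (c • u + d • v) =
      a * c * pprod u u + (a * d + b * c) * pprod u v + b * d * pprod v v := by
  simp only [pprod_add_left, pprod_add_right, pprod_smul_left, pprod_smul_right,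
    pprod_comm v u]
  ring

lemma frame_perp {U : Set (ℝ × ℝ)} {X e1 e2 : ℝ × ℝ → Fin 4 → ℝ} {u v q : Fin 4 → ℝ}
    (hsurf : IsLorentzSurface U X) (hframe : IsNormalFrame U X e1 e2)
    (huu : pprod u u = -1) (hvv : pprod v v = 1) (huv : pprod u v = 0)
    (hmem : ∀ x ∈ U, X x - q ∈ Submodule.span ℝ {u, v}) {p : ℝ × ℝ} (hp : p ∈ U) :
    pprod (e1 p) u = 0 ∧ pprod (e1 p) v = 0 ∧ pprod (e2 p) u = 0 ∧ pprod (e2 p) v = 0 := by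
  obtain ⟨hU, hX, hmet⟩ := hsurf
  have hdY : DifferentiableAt ℝ (fun z => X z - q) p :=
    ((hX.contDiffAt (hU.mem_nhds hp)).differentiableAt (by simp)).sub_const q
  have hT1 : Dx X p ∈ Submodule.span ℝ {u, v} := by
    have := fderiv_apply_mem hU hp hdY hmem (1, 0)
    rwa [fderiv_sub_const] at this
  have hT2 : Dy X p ∈ Submodule.span ℝ {u, v} := by
    have := fderiv_apply_mem hU hp hdY hmem (0, 1)
    rwa [fderiv_sub_const] at this
  rw [Submodule.mem_span_pair] at hT1 hT2
  obtain ⟨α, β, hab⟩ := hT1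
  obtain ⟨γ, δ, hcd⟩ := hT2
  have hdet := hmet p hp
  have hAA : pprod (Dx X p) (Dx X p) = -α ^ 2 + β ^ 2 := by
    rw [← hab, pprod_comb2, huu, huv, hvv]; ring
  have hBB : pprod (Dx X p) (Dy X p) = -(α * γ) + β * δ := by
    rw [← hab, ← hcd, pprod_comb2, huu, huv, hvv]; ring
  have hCC : pprod (Dy X p) (Dy X p) = -γ ^ 2 + δ ^ 2 := by
    rw [← hcd, pprod_comb2, huu, huv, hvv]; ring
  have hne : α * δ - β * γ ≠ 0 := by
    intro h
    rw [hAA, hBB, hCC] at hdet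
    have : (-α ^ 2 + β ^ 2) * (-γ ^ 2 + δ ^ 2) - (-(α * γ) + β * δ) ^ 2 =
        -(α * δ - β * γ) ^ 2 := by ring
    rw [this, h] at hdet
    norm_num at hdet
  obtain ⟨f11, f22, f12, f1x, f1y, f2x, f2y⟩ := hframe.2.2 p hp
  have h1 : α * pprod (e1 p) u + β * pprod (e1 p) v = 0 := by
    have h := f1x
    rw [← hab, pprod_add_right, pprod_smul_right, pprod_smul_right] at h
    linarith
  have h2 : γ * pprod (e1 p) u + δ * pprod (e1 p) v = 0 := by
    have h := f1y
    rw [← hcd, pprod_add_right, pprod_smul_right, pprod_smul_right] at h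
    linarith
  have h3 : α * pprod (e2 p) u + β * pprod (e2 p) v = 0 := by
    have h := f2x
    rw [← hab, pprod_add_right, pprod_smul_right, pprod_smul_right] at h
    linarith
  have h4 : γ * pprod (e2 p) u + δ * pprod (e2 p) v = 0 := by
    have h := f2y
    rw [← hcd, pprod_add_right, pprod_smul_right, pprod_smul_right] at h
    linarith
  obtain ⟨s1, t1⟩ := solve2 h1 h2 hne
  obtain ⟨s2, t2⟩ := solve2 h3 h4 hne
  exact ⟨s1, t1, s2, t2⟩
theorem stmt4 (U : Set (ℝ × ℝ)) (X e1 e2 : ℝ × ℝ → Fin 4 → ℝ)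
    (hsurf : IsLorentzSurface U X) (hframe : IsNormalFrame U X e1 e2)
    (hconn : IsConnected U) :
    ((∀ p ∈ U, ∀ q ∈ U, LG e1 e2 1 p = LG e1 e2 1 q) ∧
       (∀ p ∈ U, ∀ q ∈ U, LG e1 e2 (-1) p = LG e1 e2 (-1) q)) ↔
      (∃ q : Fin 4 → ℝ, ∃ W : Submodule ℝ (Fin 4 → ℝ), IsLorentzPlane W ∧
        ∀ p ∈ U, X p - q ∈ W) := by
  obtain ⟨hU, hX, hmet⟩ := hsurf
  obtain ⟨he1s, he2s, hfr⟩ := hframe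
  obtain ⟨p0, hp0⟩ := hconn.nonempty
  have hdiffX : ∀ p ∈ U, DifferentiableAt ℝ X p := fun p hp =>
    (hX.contDiffAt (hU.mem_nhds hp)).differentiableAt (by simp)
  -- positivity of ξ
  have hxi : ∀ σ : ℝ, σ * σ = 1 → ∀ p ∈ U, 0 < xi e1 e2 σ p := by
    intro σ hσ p hp
    obtain ⟨f11, f22, f12, -, -, -, -⟩ := hfr p hp
    have hf21 : pprod (e2 p) (e1 p) = 0 := by rw [pprod_comm]; exact f12
    have hww : pprod (e1 p + σ • e2 p) (e1 p + σ • e2 p) = 0 := by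
      rw [pprod_pm, f11, f12, hf21, f22]
      nlinarith [hσ]
    have hwz : pprod (e1 p + σ • e2 p) (e1 p + (-σ) • e2 p) = -2 := by
      rw [pprod_pm, f11, f12, hf21, f22]
      nlinarith [hσ]
    have hpos := lightlike_comp_pos (e1 p + σ • e2 p) (e1 p + (-σ) • e2 p) hww
      (by rw [hwz]; norm_num)
    have happ : ∀ i, (e1 p + σ • e2 p) i = e1 p i + σ * e2 p i := by intro i; simp
    rw [happ 0, happ 1] at hpos
    exact Real.sqrt_pos.2 hpos
  constructor
  · rintro ⟨hLG1, hLG2⟩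
    have key : ∀ σ : ℝ, σ * σ = 1 →
        (∀ p ∈ U, ∀ q ∈ U, LG e1 e2 σ p = LG e1 e2 σ q) →
        ∀ p ∈ U, pprod (X p - X p0) (e1 p0 + σ • e2 p0) = 0 := by
      intro σ hσ hconst
      set c : Fin 4 → ℝ := e1 p0 + σ • e2 p0 with hc
      have hξ0 := hxi σ hσ p0 hp0
      have hderiv0 : ∀ p ∈ U, pprod (Dx X p) c = 0 ∧ pprod (Dy X p) c = 0 := by
        intro p hp
        have hξp := hxi σ hσ p hp
        obtain ⟨-, -, -, f1x, f1y, f2x, f2y⟩ := hfr p hp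
        have h1 : pprod (Dx X p) (e1 p + σ • e2 p) = 0 := by
          rw [pprod_add_right, pprod_smul_right, pprod_comm _ (e1 p), pprod_comm _ (e2 p),
            f1x, f2x]
          ring
        have h2 : pprod (Dy X p) (e1 p + σ • e2 p) = 0 := by
          rw [pprod_add_right, pprod_smul_right, pprod_comm _ (e1 p), pprod_comm _ (e2 p),
            f1y, f2y]
          ring
        have hceq : c = (xi e1 e2 σ p0 * (xi e1 e2 σ p)⁻¹) • (e1 p + σ • e2 p) := by
          have heq : LG e1 e2 σ p0 = LG e1 e2 σ p := hconst p0 hp0 p hp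
          have h3 : xi e1 e2 σ p0 • LG e1 e2 σ p0 = c := by
            simp only [LG, smul_smul]
            rw [mul_inv_cancel₀ (ne_of_gt hξ0), one_smul]
          rw [← h3, heq]
          simp only [LG, smul_smul]
        constructor
        · rw [hceq, pprod_smul_right, h1, mul_zero]
        · rw [hceq, pprod_smul_right, h2, mul_zero]
      set f : ℝ × ℝ → ℝ := fun z => pprod (X z) c with hf
      have hfd : ∀ p ∈ U, DifferentiableAt ℝ f p := fun p hp =>
        (hasFDerivAt_pprod c (hdiffX p hp)).differentiableAt
      have hf0 : ∀ p ∈ U, fderiv ℝ f p = 0 := by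
        intro z hz
        rw [(hasFDerivAt_pprod c (hdiffX z hz)).fderiv]
        apply clm_eq_zero_of_basis
        · simpa [ContinuousLinearMap.comp_apply, pprodL_apply, Dx] using (hderiv0 z hz).1
        · simpa [ContinuousLinearMap.comp_apply, pprodL_apply, Dy] using (hderiv0 z hz).2
      have hfconst := const_on_of_fderiv_zero hU hconn.isPreconnected hfd hf0
      intro p hp
      rw [pprod_sub_left, sub_eq_zero]
      exact hfconst p hp p0 hp0
    have k1 := key 1 (by norm_num) hLG1
    have k2 := key (-1) (by norm_num) hLG2
    have horth : ∀ p ∈ U,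
        pprod (X p - X p0) (e1 p0) = 0 ∧ pprod (X p - X p0) (e2 p0) = 0 := by
      intro p hp
      have h1 := k1 p hp
      have h2 := k2 p hp
      rw [pprod_add_right, pprod_smul_right] at h1 h2
      constructor <;> linarith
    obtain ⟨u, v, huu, hvv, huv, hm1, hm2⟩ := gs (Dx X p0) (Dy X p0) (hmet p0 hp0)
    refine ⟨X p0, Submodule.span ℝ {u, v}, ⟨u, v, huu, hvv, huv, rfl⟩, ?_⟩
    intro p hp
    obtain ⟨f11, f22, f12, f1x, f1y, f2x, f2y⟩ := hfr p0 hp0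
    obtain ⟨cc, dd, hcd⟩ := exists_coords (Dx X p0) (Dy X p0) (e1 p0) (e2 p0) (X p - X p0)
      (by rw [pprod_comm]; exact f1x) (by rw [pprod_comm]; exact f2x)
      (by rw [pprod_comm]; exact f1y) (by rw [pprod_comm]; exact f2y)
      f11 f22 f12 (ne_of_lt (hmet p0 hp0)) (horth p hp).1 (horth p hp).2
    rw [hcd]
    exact Submodule.add_mem _ (Submodule.smul_mem _ _ hm1) (Submodule.smul_mem _ _ hm2)
  · rintro ⟨q0, W, ⟨u, v, huu, hvv, huv, hWeq⟩, hmem⟩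
    rw [hWeq] at hmem
    have hperp : ∀ p ∈ U, pprod (e1 p) u = 0 ∧ pprod (e1 p) v = 0 ∧
        pprod (e2 p) u = 0 ∧ pprod (e2 p) v = 0 :=
      fun p hp => frame_perp ⟨hU, hX, hmet⟩ ⟨he1s, he2s, hfr⟩ huu hvv huv hmem hp
    obtain ⟨g11, g22, g12, -, -, -, -⟩ := hfr p0 hp0
    have hg21 : pprod (e2 p0) (e1 p0) = 0 := by rw [pprod_comm]; exact g12
    have main : ∀ σ : ℝ, σ * σ = 1 → ∃ K, ∀ p ∈ U, LG e1 e2 σ p = K := by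
      intro σ hσ
      set n1 : Fin 4 → ℝ := e1 p0 with hn1
      set n2 : Fin 4 → ℝ := e2 p0 with hn2
      set γ : ℝ × ℝ → ℝ := fun z => -pprod (e1 z) n1 - σ * pprod (e2 z) n1 with hγ
      set δ : ℝ × ℝ → ℝ := fun z => pprod (e1 z) n2 + σ * pprod (e2 z) n2 with hδ
      have hdecomp : ∀ p ∈ U, e1 p + σ • e2 p = γ p • n1 + δ p • n2 := by
        intro p hp
        obtain ⟨h1u, h1v, h2u, h2v⟩ := hperp p hp
        obtain ⟨h1u0, h1v0, h2u0, h2v0⟩ := hperp p0 hp0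
        obtain ⟨cc, dd, hcd⟩ := exists_coords n1 n2 u v (e1 p + σ • e2 p)
          h1u0 h1v0 h2u0 h2v0 huu hvv huv
          (by rw [g11, g22, g12]; norm_num)
          (by rw [pprod_add_left, pprod_smul_left, h1u, h2u]; ring)
          (by rw [pprod_add_left, pprod_smul_left, h1v, h2v]; ring)
        have hpc := congrArg (fun z => pprod z n1) hcd
        have hpd := congrArg (fun z => pprod z n2) hcd
        simp only [pprod_add_left, pprod_smul_left] at hpc hpd
        rw [g11, hg21] at hpc
        rw [g12, g22] at hpd
        have hccγ : cc = γ p := by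
          simp only [hγ]
          linarith
        have hddδ : dd = δ p := by
          simp only [hδ]
          linarith
        rw [hcd, hccγ, hddδ]
      have hlight : ∀ p ∈ U, δ p ^ 2 = γ p ^ 2 := by
        intro p hp
        obtain ⟨f11, f22, f12, -, -, -, -⟩ := hfr p hp
        have hf21 : pprod (e2 p) (e1 p) = 0 := by rw [pprod_comm]; exact f12
        have hww : pprod (e1 p + σ • e2 p) (e1 p + σ • e2 p) = 0 := by
          rw [pprod_pm, f11, f12, hf21, f22]
          nlinarith [hσ]
        rw [hdecomp p hp, pprod_comb2, g11, g12, g22] at hww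
        nlinarith [hww]
      have hγne : ∀ p ∈ U, γ p ≠ 0 := by
        intro p hp h0
        have hδ0 : δ p = 0 := by
          have := hlight p hp
          rw [h0] at this
          nlinarith [this]
        have hw0 : e1 p + σ • e2 p = 0 := by
          rw [hdecomp p hp, h0, hδ0]
          simp
        obtain ⟨f11, f22, f12, -, -, -, -⟩ := hfr p hp
        have hf21 : pprod (e2 p) (e1 p) = 0 := by rw [pprod_comm]; exact f12
        have hwz : pprod (e1 p + σ • e2 p) (e1 p + (-σ) • e2 p) = -2 := by
          rw [pprod_pm, f11, f12, hf21, f22]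
          nlinarith [hσ]
        rw [hw0, pprod_zero_left] at hwz
        norm_num at hwz
      have he1c : ContinuousOn e1 U := he1s.continuousOn
      have he2c : ContinuousOn e2 U := he2s.continuousOn
      have hγc : ContinuousOn γ U :=
        ((contOn_pprod he1c continuousOn_const).neg).sub
          (continuousOn_const.mul (contOn_pprod he2c continuousOn_const))
      have hδc : ContinuousOn δ U :=
        (contOn_pprod he1c continuousOn_const).add
          (continuousOn_const.mul (contOn_pprod he2c continuousOn_const))
      -- branch: δ = γ or δ = -γ on U
      have hbranch : (∀ p ∈ U, δ p - γ p = 0) ∨ (∀ p ∈ U, δ p + γ p = 0) := by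
        apply dichotomy hU hconn.isPreconnected (hδc.sub hγc) (hδc.add hγc)
        · intro p hp
          have := hlight p hp
          have hfac : (δ p - γ p) * (δ p + γ p) = 0 := by nlinarith [this]
          rcases mul_eq_zero.1 hfac with h | h
          · exact Or.inl h
          · exact Or.inr h
        · rintro p hp ⟨ha, hb⟩
          exact hγne p hp (by simp only [Pi.sub_apply, Pi.add_apply] at ha hb; linarith)
      obtain ⟨s, hs2, hδγ⟩ : ∃ s : ℝ, s * s = 1 ∧ ∀ p ∈ U, δ p = s * γ p := by
        rcases hbranch with h | h
        · exact ⟨1, by norm_num, fun p hp => by have := h p hp; linarith⟩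
        · exact ⟨-1, by norm_num, fun p hp => by have := h p hp; linarith⟩
      set m : Fin 4 → ℝ := n1 + s • n2 with hm
      have hdecomp2 : ∀ p ∈ U, e1 p + σ • e2 p = γ p • m := by
        intro p hp
        rw [hdecomp p hp, hδγ p hp, hm, smul_add, smul_smul]
        ring_nf
      have hmm : pprod m m = 0 := by
        rw [hm, pprod_pm, g11, g12, hg21, g22]
        nlinarith [hs2]
      have hmz : pprod m (n1 + (-s) • n2) = -2 := by
        rw [hm, pprod_pm, g11, g12, hg21, g22]
        nlinarith [hs2]
      have hm01 : 0 < m 0 ^ 2 + m 1 ^ 2 :=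
        lightlike_comp_pos m (n1 + (-s) • n2) hmm (by rw [hmz]; norm_num)
      set ρ : ℝ := Real.sqrt (m 0 ^ 2 + m 1 ^ 2) with hρdef
      have hρ : 0 < ρ := Real.sqrt_pos.2 hm01
      have hxi_eq : ∀ p ∈ U, xi e1 e2 σ p = |γ p| * ρ := by
        intro p hp
        have h0 : e1 p 0 + σ * e2 p 0 = γ p * m 0 := by
          have := congrFun (hdecomp2 p hp) 0
          simpa using this
        have h1 : e1 p 1 + σ * e2 p 1 = γ p * m 1 := by
          have := congrFun (hdecomp2 p hp) 1
          simpa using this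
        simp only [xi]
        rw [h0, h1, show (γ p * m 0) ^ 2 + (γ p * m 1) ^ 2 =
          γ p ^ 2 * (m 0 ^ 2 + m 1 ^ 2) from by ring,
          Real.sqrt_mul (sq_nonneg _), Real.sqrt_sq_eq_abs]
      have hLGf : ∀ p ∈ U, LG e1 e2 σ p = (γ p / (|γ p| * ρ)) • m := by
        intro p hp
        simp only [LG]
        rw [hxi_eq p hp, hdecomp2 p hp, smul_smul, inv_mul_eq_div]
      -- sign of γ is constant
      set A : Set (ℝ × ℝ) := U ∩ γ ⁻¹' Set.Ioi 0 with hA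
      set B : Set (ℝ × ℝ) := U ∩ γ ⁻¹' Set.Iio 0 with hB
      have hAo : IsOpen A := hγc.isOpen_inter_preimage hU isOpen_Ioi
      have hBo : IsOpen B := hγc.isOpen_inter_preimage hU isOpen_Iio
      have hdisj : Disjoint A B := by
        rw [Set.disjoint_iff]
        rintro x ⟨⟨-, h1⟩, -, h2⟩
        have h1' : (0:ℝ) < γ x := h1
        have h2' : γ x < 0 := h2
        linarith
      have hcov : U ⊆ A ∪ B := by
        intro x hx
        rcases lt_or_gt_of_ne (hγne x hx) with h | h
        · exact Or.inr ⟨hx, h⟩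
        · exact Or.inl ⟨hx, h⟩
      rcases hconn.isPreconnected.subset_or_subset hAo hBo hdisj hcov with hsub | hsub
      · refine ⟨ρ⁻¹ • m, ?_⟩
        intro p hp
        have hpos : (0:ℝ) < γ p := (hsub hp).2
        rw [hLGf p hp, abs_of_pos hpos, div_sign_pos hpos hρ]
      · refine ⟨(-ρ⁻¹) • m, ?_⟩
        intro p hp
        have hneg : γ p < 0 := (hsub hp).2
        rw [hLGf p hp, abs_of_neg hneg, div_sign_neg hneg hρ]
    obtain ⟨K1, hK1⟩ := main 1 (by norm_num)
    obtain ⟨K2, hK2⟩ := main (-1) (by norm_num)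
    exact ⟨fun p hp q hq => by rw [hK1 p hp, hK1 q hq],
      fun p hp q hq => by rw [hK2 p hp, hK2 q hq]⟩
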